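/- Let P = (A,B,R), P' = (A',B',R'), Q = (C,B,T) and Q' = (C',B',T') be relations, and suppose there is a partial order ⪯ on B that is both downwards P-compatible and upwards Q-compatible. If TWO has a winning strategy in the game G_fin(Dom(P'), Dom(Q')) and (Dom(P), Dom(Q))-Lindelöf holds, then (Dom(P⊗P'), Dom(Q⊗Q'))-Lindelöf holds. -/

import Mathlib

open Set

/-- `GDom R` is the set of dominating families of the relation `R`:
sets `Z ⊆ B` such that every `a ∈ A` is dominated by some `b ∈ Z`. -/
def GDom {α β : Type*} (R : α → β → Prop) : Set (Set β) :=
  {Z | ∀ a : α, ∃ b ∈ Z, R a b}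

/-- A relation is total: every element of the domain is dominated by something. -/
def IsTotalRel {α β : Type*} (R : α → β → Prop) : Prop :=
  ∀ a : α, ∃ b : β, R a b

/-- The product of two relations. -/
def GProd {α β α' β' : Type*} (R : α → β → Prop) (R' : α' → β' → Prop) :
    α × α' → β × β' → Prop :=
  fun a b => R a.1 b.1 ∧ R' a.2 b.2

/-- The finite history consisting of the first `n` moves of the sequence `b`. -/
def GHist {β : Type*} (b : ℕ → β) (n : ℕ) : List β :=
  List.ofFn fun i : Fin n => b i

/-- ONE has a winning strategy in the game `G(P,Q)`: in inning `n` ONE plays `aₙ ∈ A`,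
TWO answers `bₙ` with `R aₙ bₙ`; ONE wins iff `{bₙ : n} ∈ GDom T`. -/
def OneWinsG {α β γ : Type*} (R : α → β → Prop) (T : γ → β → Prop) : Prop :=
  ∃ σ : List β → α, ∀ b : ℕ → β,
    (∀ n, R (σ (GHist b n)) (b n)) → Set.range b ∈ GDom T

/-- TWO has a winning strategy in the game `G(P,Q)`. -/
def TwoWinsG {α β γ : Type*} (R : α → β → Prop) (T : γ → β → Prop) : Prop :=
  ∃ τ : List α → β, ∀ a : ℕ → α,
    (∀ n, R (a n) (τ (GHist a (n + 1)))) ∧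
    Set.range (fun n => τ (GHist a (n + 1))) ∉ GDom T

/-- ONE has a winning strategy in the game `G₁(𝒜,ℬ)`: in inning `n` ONE plays `Aₙ ∈ 𝒜`,
TWO answers `bₙ ∈ Aₙ`; TWO wins iff `{bₙ : n} ∈ ℬ`. -/
def OneWinsG1 {β : Type*} (𝒜 ℬ : Set (Set β)) : Prop :=
  ∃ σ : List β → Set β, (∀ h, σ h ∈ 𝒜) ∧
    ∀ b : ℕ → β, (∀ n, b n ∈ σ (GHist b n)) → Set.range b ∉ ℬ

/-- TWO has a winning strategy in the game `G₁(𝒜,ℬ)`. -/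
def TwoWinsG1 {β : Type*} (𝒜 ℬ : Set (Set β)) : Prop :=
  ∃ τ : List (Set β) → β, ∀ S : ℕ → Set β, (∀ n, S n ∈ 𝒜) →
    (∀ n, τ (GHist S (n + 1)) ∈ S n) ∧
    Set.range (fun n => τ (GHist S (n + 1))) ∈ ℬ

/-- TWO has a winning strategy in the game `G_fin(𝒜,ℬ)`: in inning `n` ONE plays `Aₙ ∈ 𝒜`,
TWO answers a finite `Fₙ ⊆ Aₙ`; TWO wins iff `⋃ₙ Fₙ ∈ ℬ`. -/
def TwoWinsGfin {β : Type*} (𝒜 ℬ : Set (Set β)) : Prop :=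
  ∃ τ : List (Set β) → Set β, ∀ S : ℕ → Set β, (∀ n, S n ∈ 𝒜) →
    (∀ n, τ (GHist S (n + 1)) ⊆ S n ∧ (τ (GHist S (n + 1))).Finite) ∧
    (⋃ n, τ (GHist S (n + 1))) ∈ ℬ

/-- `(𝒜,ℬ)`-Lindelöf: every member of `𝒜` has a countable subset belonging to `ℬ`. -/
def LindelofFam {β : Type*} (𝒜 ℬ : Set (Set β)) : Prop :=
  ∀ S ∈ 𝒜, ∃ C ⊆ S, C.Countable ∧ C ∈ ℬ

/-- The selection principle `S₁(𝒜,ℬ)`. -/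
def SelS1 {β : Type*} (𝒜 ℬ : Set (Set β)) : Prop :=
  ∀ A : ℕ → Set β, (∀ n, A n ∈ 𝒜) →
    ∃ b : ℕ → β, (∀ n, b n ∈ A n) ∧ Set.range b ∈ ℬ

/-- The selection principle `S_fin(𝒜,ℬ)`. -/
def SelSfin {β : Type*} (𝒜 ℬ : Set (Set β)) : Prop :=
  ∀ A : ℕ → Set β, (∀ n, A n ∈ 𝒜) →
    ∃ F : ℕ → Set β, (∀ n, F n ⊆ A n ∧ (F n).Finite) ∧ (⋃ n, F n) ∈ ℬ

/-- `𝒪_X`: the family of open covers of `X`. -/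
def OpenCovers (X : Type*) [TopologicalSpace X] : Set (Set (Set X)) :=
  {𝒰 | (∀ U ∈ 𝒰, IsOpen U) ∧ ⋃₀ 𝒰 = Set.univ}

/-- ONE has a winning strategy in the point-open game on `X`. -/
def OneWinsPointOpen (X : Type*) [TopologicalSpace X] : Prop :=
  ∃ σ : List (Set X) → X, ∀ U : ℕ → Set X,
    (∀ n, IsOpen (U n) ∧ σ (GHist U n) ∈ U n) → Set.range U ∈ OpenCovers X

/-- TWO has a winning strategy in the point-open game on `X`. -/
def TwoWinsPointOpen (X : Type*) [TopologicalSpace X] : Prop :=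
  ∃ τ : List X → Set X, ∀ x : ℕ → X,
    (∀ n, IsOpen (τ (GHist x (n + 1))) ∧ x n ∈ τ (GHist x (n + 1))) ∧
    Set.range (fun n => τ (GHist x (n + 1))) ∉ OpenCovers X

/-- `𝔇_X`: the family of dense subsets of `X`. -/
def DenseSets (X : Type*) [TopologicalSpace X] : Set (Set X) :=
  {D | Dense D}

/-- ONE has a winning strategy in the point-picking game `G^D_ω(X)` of Berner and Juhász. -/
def OneWinsPointPicking (X : Type*) [TopologicalSpace X] : Prop :=
  ∃ σ : List X → Set X, (∀ h, IsOpen (σ h) ∧ (σ h).Nonempty) ∧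
    ∀ x : ℕ → X, (∀ n, x n ∈ σ (GHist x n)) → Dense (Set.range x)

/-- TWO has a winning strategy in the point-picking game `G^D_ω(X)`. -/
def TwoWinsPointPicking (X : Type*) [TopologicalSpace X] : Prop :=
  ∃ τ : List (Set X) → X, ∀ U : ℕ → Set X,
    (∀ n, IsOpen (U n) ∧ (U n).Nonempty) →
    (∀ n, τ (GHist U (n + 1)) ∈ U n) ∧
    ¬ Dense (Set.range fun n => τ (GHist U (n + 1)))

/-- `𝒟_X`: families of open sets whose union is dense in `X`. -/
def DenseUnionFams (X : Type*) [TopologicalSpace X] : Set (Set (Set X)) :=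
  {𝒰 | (∀ U ∈ 𝒰, IsOpen U) ∧ Dense (⋃₀ 𝒰)}

/-- ONE has a winning strategy in Tkachuk's game `θ(X)`. -/
def OneWinsTheta (X : Type*) [TopologicalSpace X] : Prop :=
  ∃ σ : List (Set X) → X, ∀ U : ℕ → Set X,
    (∀ n, IsOpen (U n) ∧ σ (GHist U n) ∈ U n) → Dense (⋃ n, U n)

/-- TWO has a winning strategy in Tkachuk's game `θ(X)`. -/
def TwoWinsTheta (X : Type*) [TopologicalSpace X] : Prop :=
  ∃ τ : List X → Set X, ∀ x : ℕ → X,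
    (∀ n, IsOpen (τ (GHist x (n + 1))) ∧ x n ∈ τ (GHist x (n + 1))) ∧
    ¬ Dense (⋃ n, τ (GHist x (n + 1)))

/-- `Ω_x`: the family of subsets of `X` having `x` in their closure. -/
def OmegaPt {X : Type*} [TopologicalSpace X] (x : X) : Set (Set X) :=
  {A | x ∈ closure A}

/-- ONE has a winning strategy in Gruenhage's game `G^c_{O,P}(X,x)`. -/
def OneWinsGruenhage {X : Type*} [TopologicalSpace X] (x : X) : Prop :=
  ∃ σ : List X → Set X, (∀ h, IsOpen (σ h) ∧ x ∈ σ h) ∧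
    ∀ y : ℕ → X, (∀ n, y n ∈ σ (GHist y n)) → x ∈ closure (Set.range y)

/-- TWO has a winning strategy in Gruenhage's game `G^c_{O,P}(X,x)`. -/
def TwoWinsGruenhage {X : Type*} [TopologicalSpace X] (x : X) : Prop :=
  ∃ τ : List (Set X) → X, ∀ V : ℕ → Set X,
    (∀ n, IsOpen (V n) ∧ x ∈ V n) →
    (∀ n, τ (GHist V (n + 1)) ∈ V n) ∧
    x ∉ closure (Set.range fun n => τ (GHist V (n + 1)))

/-- ONE has a winning strategy in the compact-open game on `X`. -/
def OneWinsCompactOpen (X : Type*) [TopologicalSpace X] : Prop :=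
  ∃ σ : List (Set X) → Set X, (∀ h, IsCompact (σ h)) ∧
    ∀ U : ℕ → Set X, (∀ n, IsOpen (U n) ∧ σ (GHist U n) ⊆ U n) →
      (⋃ n, U n) = Set.univ

/-- `⪯` is downwards `P`-compatible. -/
def DownwardsCompat {α β : Type*} (R : α → β → Prop) (le : β → β → Prop) : Prop :=
  ∀ a b₁ b₂, R a b₁ → R a b₂ → ∃ b, R a b ∧ le b b₁ ∧ le b b₂

/-- `⪯` is upwards `Q`-compatible. -/
def UpwardsCompat {γ β : Type*} (T : γ → β → Prop) (le : β → β → Prop) : Prop :=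
  ∀ c b₁ b₂, T c b₁ → le b₁ b₂ → T c b₂

/-- `⪯` is countably downwards `P`-compatible. -/
def CountablyDownwardsCompat {α β : Type*} (R : α → β → Prop) (le : β → β → Prop) : Prop :=
  ∀ a, ∀ E : Set β, E.Countable → E.Nonempty → (∀ b ∈ E, R a b) →
    ∃ b', R a b' ∧ ∀ b ∈ E, le b' b

/-- A relation is `ℵ₀`-preserving if some partial order on `B` is both upwards
compatible and countably downwards compatible with it. -/
def Aleph0Preserving {α β : Type*} (R : α → β → Prop) : Prop :=
  ∃ le : β → β → Prop, IsPartialOrder β le ∧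
    UpwardsCompat R le ∧ CountablyDownwardsCompat R le

/-- `Dom_γ(T)`: the γ-dominating sequences of the relation `T`. -/
def GDomGamma {γ β : Type*} (T : γ → β → Prop) : Set (ℕ → β) :=
  {z | ∀ c : γ, {n : ℕ | ¬ T c (z n)}.Finite}

/-- ONE has a winning strategy in the game `G_γ(P,Q)`. -/
def OneWinsGgamma {α β γ : Type*} (R : α → β → Prop) (T : γ → β → Prop) : Prop :=
  ∃ σ : List β → α, ∀ b : ℕ → β,
    (∀ n, R (σ (GHist b n)) (b n)) → b ∈ GDomGamma T

/-- TWO has a winning strategy in the game `G_γ(P,Q)`. -/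
def TwoWinsGgamma {α β γ : Type*} (R : α → β → Prop) (T : γ → β → Prop) : Prop :=
  ∃ τ : List α → β, ∀ a : ℕ → α,
    (∀ n, R (a n) (τ (GHist a (n + 1)))) ∧
    (fun n => τ (GHist a (n + 1))) ∉ GDomGamma T

/-- ONE has a winning strategy in the game `G₁(𝒜, Dom_γ(T))`. -/
def OneWinsG1gamma {β γ : Type*} (𝒜 : Set (Set β)) (T : γ → β → Prop) : Prop :=
  ∃ σ : List β → Set β, (∀ h, σ h ∈ 𝒜) ∧
    ∀ b : ℕ → β, (∀ n, b n ∈ σ (GHist b n)) → b ∉ GDomGamma T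

/-- TWO has a winning strategy in the game `G₁(𝒜, Dom_γ(T))`. -/
def TwoWinsG1gamma {β γ : Type*} (𝒜 : Set (Set β)) (T : γ → β → Prop) : Prop :=
  ∃ τ : List (Set β) → β, ∀ S : ℕ → Set β, (∀ n, S n ∈ 𝒜) →
    (∀ n, τ (GHist S (n + 1)) ∈ S n) ∧
    (fun n => τ (GHist S (n + 1))) ∈ GDomGamma T

/-- The `ℵ₀`-modification of a relation: moves become nonempty countable subsets of `B`,
dominated pointwise. -/
def CountMod {α β : Type*} (R : α → β → Prop) :
    α → {E : Set β // E.Countable ∧ E.Nonempty} → Prop :=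
  fun a E => ∀ b ∈ E.1, R a b

/-!
ONE answers `S ∈ Dom(P⊗P')` by playing, for `a ∈ A`, the slice
`S_a = {b' | ∃ b, a R b ∧ (b, b') ∈ S}`, which lies in `Dom(P')`. TWO's finite reply inside `S_a` lifts to finitely many pairs of `S`
whose first coordinates all lie above a single `t_a` with `a R t_a` (downward compatibility).
The `t_a` form a member of `Dom(P)`, so by Lindelöf countably many of them already form a
member of `Dom(Q)`; ONE only uses the corresponding `a`, which gives a countable tree of plays,
and the lifted pairs along this tree form the required countable set. For `(c, c')`, follow the
branch on which always `c T t_a`: TWO wins that play, so `c' T' b'` for some lifted pair `(b, b')`,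
and `t_a ⪯ b` gives `c T b` by upward compatibility.
-/

lemma GHist_succ {β : Type*} (b : ℕ → β) (n : ℕ) :
    GHist b (n + 1) = GHist b n ++ [b n] := by
  rw [GHist, List.ofFn_succ']
  simp [GHist, List.concat_eq_append, Fin.last]

lemma GHist_map {β β' : Type*} (f : β → β') (b : ℕ → β) (n : ℕ) :
    (GHist b n).map f = GHist (fun k => f (b k)) n := by
  simp [GHist, List.map_ofFn, Function.comp_def]

lemma GHist_getD_succ {β : Type*} (L : List β) (d : β) :
    GHist (fun n => L.getD n d) (L.length + 1) = L ++ [d] := by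
  have hL : GHist (fun n => L.getD n d) L.length = L :=
    List.ext_getElem (by simp [GHist]) fun i _ hi => by
      simp only [GHist, List.getElem_ofFn, List.getD_eq_getElem _ _ hi]
  rw [GHist_succ, hL, List.getD_eq_default _ _ le_rfl]

def IsWinningGfin {β : Type*} (𝒜 ℬ : Set (Set β)) (τ : List (Set β) → Set β) : Prop :=
  ∀ S : ℕ → Set β, (∀ n, S n ∈ 𝒜) →
    (∀ n, τ (GHist S (n + 1)) ⊆ S n ∧ (τ (GHist S (n + 1))).Finite) ∧
    (⋃ n, τ (GHist S (n + 1))) ∈ ℬ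

lemma IsWinningGfin.reply_subset_finite {β : Type*} {𝒜 ℬ : Set (Set β)}
    {τ : List (Set β) → Set β} (hτ : IsWinningGfin 𝒜 ℬ τ) {L : List (Set β)}
    (hL : ∀ Y ∈ L, Y ∈ 𝒜) {X : Set β} (hX : X ∈ 𝒜) :
    τ (L ++ [X]) ⊆ X ∧ (τ (L ++ [X])).Finite := by
  -- extend the finite history to a play by repeating `X` forever
  have hplay : ∀ n, L.getD n X ∈ 𝒜 := fun n => by
    rcases lt_or_ge n L.length with hn | hn
    · exact List.getD_eq_getElem _ _ hn ▸ hL _ (List.getElem_mem hn)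
    · exact List.getD_eq_default _ _ hn ▸ hX
  have hreply := (hτ _ hplay).1 L.length
  rwa [GHist_getD_succ, List.getD_eq_default _ _ le_rfl] at hreply

def domSlice {α β β' : Type*} (R : α → β → Prop) (S : Set (β × β')) (a : α) : Set β' :=
  Prod.snd '' {q ∈ S | R a q.1}

lemma domSlice_mem_GDom {α β α' β' : Type*} {R : α → β → Prop} {R' : α' → β' → Prop}
    {S : Set (β × β')} (hS : S ∈ GDom (GProd R R')) (a : α) : domSlice R S a ∈ GDom R' := by
  intro a'
  obtain ⟨q, hqS, hq, hq'⟩ := hS (a, a')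
  exact ⟨q.2, ⟨q, ⟨hqS, hq⟩, rfl⟩, hq'⟩

section Compat

variable {α β : Type*} {R : α → β → Prop} {le : β → β → Prop}

lemma DownwardsCompat.exists_le_of_finite [IsTrans β le] (hdown : DownwardsCompat R le)
    {a : α} (ha : ∃ b, R a b) {G : Set β} (hG : G.Finite) (hGR : ∀ x ∈ G, R a x) :
    ∃ b, R a b ∧ ∀ x ∈ G, le b x := by
  induction G, hG using Set.Finite.induction_on with
  | empty => simpa using ha
  | @insert x G _ _ ih =>
    obtain ⟨b₀, hb₀, hb₀G⟩ := ih fun y hy => hGR y (mem_insert_of_mem x hy)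
    obtain ⟨b, hb, hbx, hbb₀⟩ := hdown a x b₀ (hGR x (mem_insert x G)) hb₀
    refine ⟨b, hb, fun y hy => ?_⟩
    rcases hy with rfl | hy
    · exact hbx
    · exact _root_.trans hbb₀ (hb₀G y hy)

lemma DownwardsCompat.exists_finite_lift [IsTrans β le] {β' : Type*}
    (hdown : DownwardsCompat R le) (hR : IsTotalRel R) {S : Set (β × β')} {a : α}
    {F : Set β'} (hF : F.Finite) (hFS : F ⊆ domSlice R S a) :
    ∃ t E, R a t ∧ E ⊆ S ∧ E.Finite ∧ (∀ q ∈ E, le t q.1) ∧ F ⊆ Prod.snd '' E := by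
  obtain ⟨E, hES, hE, hFE⟩ := exists_subset_image_finite_and.1 ⟨F, hFS, hF, subset_rfl⟩
  obtain ⟨t, ht, htE⟩ := hdown.exists_le_of_finite (hR a) (hE.image Prod.fst)
    (by rintro _ ⟨q, hq, rfl⟩; exact (hES hq).2)
  exact ⟨t, E, ht, fun q hq => (hES hq).1, hE, fun q hq => htE _ (mem_image_of_mem _ hq), hFE⟩

end Compat

lemma LindelofFam.exists_countable_index {α β γ ι : Type*} {R : α → β → Prop}
    {T : γ → β → Prop} (hLin : LindelofFam (GDom R) (GDom T)) {f : ι → β}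
    (hf : range f ∈ GDom R) : ∃ D : Set ι, D.Countable ∧ ∀ c, ∃ i ∈ D, T c (f i) := by
  obtain ⟨C, hCf, hC, hCT⟩ := hLin _ hf
  choose g hg using fun x : C => hCf x.2
  have := hC.to_subtype
  refine ⟨range g, countable_range g, fun c => ?_⟩
  obtain ⟨b, hbC, hb⟩ := hCT c
  exact ⟨g ⟨b, hbC⟩, mem_range_self _, (hg ⟨b, hbC⟩).symm ▸ hb⟩

section Tree

variable {α : Type*}

def treeLevel (D : List α → Set α) : ℕ → Set (List α)
  | 0 => {[]}
  | n + 1 => ⋃ l ∈ treeLevel D n, (fun a => l ++ [a]) '' D l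

lemma countable_treeLevel {D : List α → Set α} (hD : ∀ l, (D l).Countable) (n : ℕ) :
    (treeLevel D n).Countable := by
  induction n with
  | zero => exact countable_singleton _
  | succ n ih => exact ih.biUnion fun l _ => (hD l).image _

def pathOf (p : List α → α) : ℕ → List α
  | 0 => []
  | n + 1 => pathOf p n ++ [p (pathOf p n)]

lemma pathOf_mem_treeLevel {D : List α → Set α} {p : List α → α} (hp : ∀ l, p l ∈ D l)
    (n : ℕ) : pathOf p n ∈ treeLevel D n := by
  induction n with
  | zero => rfl
  | succ n ih => exact mem_biUnion ih (mem_image_of_mem _ (hp _))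

lemma pathOf_eq_GHist (p : List α → α) (n : ℕ) :
    pathOf p n = GHist (fun k => p (pathOf p k)) n := by
  induction n with
  | zero => rfl
  | succ n ih => rw [GHist_succ, ← ih, pathOf]

end Tree

theorem statement12_general {α β γ α' β' γ' : Type*}
    (R : α → β → Prop) (T : γ → β → Prop)
    (R' : α' → β' → Prop) (T' : γ' → β' → Prop)
    (hR : IsTotalRel R)
    (le : β → β → Prop) (hpo : IsPartialOrder β le)
    (hdown : DownwardsCompat R le) (hup : UpwardsCompat T le)
    (hwin : TwoWinsGfin (GDom R') (GDom T'))
    (hLin : LindelofFam (GDom R) (GDom T)) :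
    LindelofFam (GDom (GProd R R')) (GDom (GProd T T')) := by
  intro S hS
  obtain ⟨τ, hτ⟩ : ∃ τ, IsWinningGfin (GDom R') (GDom T') τ := hwin
  have hslice := domSlice_mem_GDom hS
  have hreply (l : List α) (a : α) :=
    hτ.reply_subset_finite (L := l.map (domSlice R S)) (by simpa using fun a _ => hslice a)
      (hslice a)
  choose t E ht hES hE hEt hFE using fun l a =>
    hdown.exists_finite_lift hR (hreply l a).2 (hreply l a).1
  choose D hD hDT using fun l => hLin.exists_countable_index
    (f := t l) fun a => ⟨t l a, mem_range_self a, ht l a⟩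
  refine ⟨⋃ n, ⋃ l ∈ treeLevel D n, ⋃ a ∈ D l, E l a, ?_, ?_, ?_⟩
  · simp only [iUnion_subset_iff]
    exact fun n l _ a _ => hES l a
  · exact countable_iUnion fun n =>
      (countable_treeLevel hD n).biUnion fun l _ => (hD l).biUnion fun a _ => (hE l a).countable
  · rintro ⟨c, c'⟩
    choose p hpD hpT using fun l => hDT l c
    obtain ⟨b', hb', hcb'⟩ := (hτ _ fun n => hslice (p (pathOf p n))).2 c'
    obtain ⟨n, hn⟩ := mem_iUnion.1 hb'
    rw [GHist_succ, ← GHist_map (domSlice R S), ← pathOf_eq_GHist] at hn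
    obtain ⟨q, hqE, rfl⟩ := hFE _ _ hn
    refine ⟨q, ?_, hup c _ _ (hpT _) (hEt _ _ q hqE), hcb'⟩
    simp only [mem_iUnion]
    exact ⟨n, _, pathOf_mem_treeLevel hpD n, _, hpD _, hqE⟩

/-- With a partial order on `B` downwards `P`-compatible and upwards
`Q`-compatible, if TWO has a winning strategy in `G_fin(Dom(P'), Dom(Q'))` and
`(Dom(P), Dom(Q))`-Lindelöf holds, then `(Dom(P⊗P'), Dom(Q⊗Q'))`-Lindelöf holds. -/
theorem statement12 {α β γ α' β' γ' : Type*}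
    [Nonempty α] [Nonempty γ] [Nonempty α'] [Nonempty γ']
    (R : α → β → Prop) (T : γ → β → Prop)
    (R' : α' → β' → Prop) (T' : γ' → β' → Prop)
    (hR : IsTotalRel R) (hT : IsTotalRel T)
    (hR' : IsTotalRel R') (hT' : IsTotalRel T')
    (le : β → β → Prop) (hpo : IsPartialOrder β le)
    (hdown : DownwardsCompat R le) (hup : UpwardsCompat T le)
    (hwin : TwoWinsGfin (GDom R') (GDom T'))
    (hLin : LindelofFam (GDom R) (GDom T)) :
    LindelofFam (GDom (GProd R R')) (GDom (GProd T T')) :=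
  statement12_general R T R' T' hR le hpo hdown hup hwin hLin
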